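/- arXiv:1107.2543 — 3 statements merged into one kernel-verified Lean document; each statement's English description precedes it below -/
import Mathlib

section
/- There exists a constant α₁ > 0 such that for every real x ≥ 0 and every integer n ≥ 1, P_x( min_{0 ≤ j ≤ n} S_j ≥ 0 ) ≤ α₁ (1 + x) n^{-1/2}. -/
/-!
Work on the canonical space: the increments form an i.i.d. sequence `v` with law
`infinitePi (fun _ ↦ ν)`, and the walk is `walk v n = v 0 + ⋯ + v (n - 1)`.

Fix `y > 0` with `p = ν [2y, ∞) > 0` and let `q j` be the probability that the walk stays above
`-y` up to time `j`. Call `j` a ladder step if `S j` is within `y` of the running maximum `M j` and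
the next increment is at least `2y`; then `M (j + 1) ≥ M j + y`. By time reversal and independence
a ladder step at `j` has probability `q j * p`, so `y p ∑_{j<n} q j ≤ E[M n] = O(σ √n)`, the last
bound by an Ottaviani maximal inequality and Chebyshev.

A walk staying above `-x` up to time `m` has its minimum in one of `⌊x / y⌋ + 1` windows of width
`y`. Splitting at the first passage into a window, the probabilities of being in a given window at
times `m < n` add up to at most `∑_{j<n} q j`. As the event is decreasing in the horizon,
`n P_x(min_{j ≤ n} S j ≥ 0) ≤ (x / y + 1) ∑_{j<n} q j = O((1 + x) √n)`.
-/

open MeasureTheory ProbabilityTheory Filter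

section Auxiliary

open Finset

lemma sum_range_sum_range_succ_mul_le {f g : ℕ → ℝ} (hf : ∀ k, 0 ≤ f k) (hg : ∀ j, 0 ≤ g j)
    (n : ℕ) :
    ∑ m ∈ range n, ∑ k ∈ range (m + 1), f k * g (m - k)
      ≤ (∑ k ∈ range n, f k) * ∑ j ∈ range n, g j := by
  calc ∑ m ∈ range n, ∑ k ∈ range (m + 1), f k * g (m - k)
      = ∑ k ∈ range n, ∑ m ∈ Ico k n, f k * g (m - k) :=
        sum_comm' fun m k ↦ by simp only [mem_range, Finset.mem_Ico]; omega
    _ = ∑ k ∈ range n, f k * ∑ j ∈ range (n - k), g j := by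
        simp [sum_Ico_eq_sum_range, mul_sum]
    _ ≤ ∑ k ∈ range n, f k * ∑ j ∈ range n, g j := by
        gcongr with k
        · exact hf k
        · exact fun j _ _ ↦ hg j
        · exact Nat.sub_le n k
    _ = _ := (sum_mul ..).symm

lemma le_add_sum_ite_le {t m a : ℝ} (R : ℕ) (ha : 0 < a) (htm : t ≤ m) (htR : t ≤ R * a) :
    t ≤ a + ∑ r ∈ Icc 1 R, a * if r * a ≤ m then 1 else 0 := by
  set q := ⌊t / a⌋₊
  have hqR : q ≤ R := Nat.floor_le_of_le ((div_le_iff₀ ha).2 htR)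
  have hcount : (q : ℝ) * a ≤ ∑ r ∈ Icc 1 R, a * if r * a ≤ m then 1 else 0 := by
    calc (q : ℝ) * a = ∑ r ∈ Icc 1 q, a := by simp [mul_comm]
      _ = ∑ r ∈ Icc 1 q, a * if r * a ≤ m then 1 else 0 := by
        refine sum_congr rfl fun r hr ↦ ?_
        have hr := Finset.mem_Icc.1 hr
        have : (r : ℝ) * a ≤ m := by
          have := (Nat.le_floor_iff' (by omega)).1 hr.2
          linarith [(le_div_iff₀ ha).1 this]
        simp [this]
      _ ≤ _ := sum_le_sum_of_subset_of_nonneg (Icc_subset_Icc_right hqR) fun r _ _ ↦ by positivity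
  have : t < (q + 1) * a := (div_lt_iff₀ ha).1 (Nat.lt_floor_add_one _)
  linarith

variable {Ω ι : Type*} [MeasurableSpace Ω] {μ : Measure Ω}

lemma integrable_mul_indicator_one [IsFiniteMeasure μ] {A : Set Ω} (hA : MeasurableSet A)
    (a : ℝ) :
    Integrable (fun ω ↦ a * A.indicator 1 ω) μ :=
  ((integrable_const (1 : ℝ)).indicator hA : Integrable (A.indicator 1) μ).const_mul a

lemma integral_sum_mul_indicator_one [IsFiniteMeasure μ] {s : Finset ι} {A : ι → Set Ω}
    (hA : ∀ i ∈ s, MeasurableSet (A i)) (a : ι → ℝ) :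
    ∫ ω, ∑ i ∈ s, a i * (A i).indicator 1 ω ∂μ = ∑ i ∈ s, a i * μ.real (A i) := by
  rw [integral_finsetSum _ fun i hi ↦ integrable_mul_indicator_one (hA i hi) (a i)]
  exact sum_congr rfl fun i hi ↦ by rw [integral_const_mul, integral_indicator_one (hA i hi)]

lemma sum_mul_measureReal_le_of_forall_le {κ : Type*} [IsProbabilityMeasure μ] {s : Finset ι}
    {t : Finset κ} {A : ι → Set Ω} {B : κ → Set Ω} (hA : ∀ i ∈ s, MeasurableSet (A i))
    (hB : ∀ j ∈ t, MeasurableSet (B j)) {a : ι → ℝ} {b : κ → ℝ} {c : ℝ}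
    (h : ∀ ω, ∑ i ∈ s, a i * (A i).indicator 1 ω ≤ c + ∑ j ∈ t, b j * (B j).indicator 1 ω) :
    ∑ i ∈ s, a i * μ.real (A i) ≤ c + ∑ j ∈ t, b j * μ.real (B j) := by
  have hB' : Integrable (fun ω ↦ ∑ j ∈ t, b j * (B j).indicator 1 ω) μ :=
    integrable_finsetSum _ fun j hj ↦ integrable_mul_indicator_one (hB j hj) (b j)
  have := integral_mono
    (integrable_finsetSum _ fun i hi ↦ integrable_mul_indicator_one (hA i hi) (a i))
    ((integrable_const c).add hB') h
  simp only [Pi.add_apply] at this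
  rwa [integral_add (integrable_const c) hB', integral_sum_mul_indicator_one hA,
    integral_sum_mul_indicator_one hB, integral_const, probReal_univ, one_smul] at this

lemma measure_preimage_seq_eq_infinitePi {X : ℕ → Ω → ℝ} (hmeas : ∀ i, Measurable (X i))
    (hindep : iIndepFun X μ) (hident : ∀ i, IdentDistrib (X i) (X 0) μ μ)
    {A : Set (ℕ → ℝ)} (hA : MeasurableSet A) :
    μ ((fun ω i ↦ X i ω) ⁻¹' A) = Measure.infinitePi (fun _ ↦ μ.map (X 0)) A := by
  rw [← Measure.map_apply (measurable_pi_lambda _ hmeas) hA,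
    hindep.map_fun_eq_infinitePi_map hmeas]
  simp_rw [fun i ↦ (hident i).map_eq]

end Auxiliary

namespace RandomWalk

open Finset

def walk (v : ℕ → ℝ) (n : ℕ) : ℝ := ∑ i ∈ range n, v i

@[simp] lemma walk_zero (v : ℕ → ℝ) : walk v 0 = 0 := by simp [walk]

lemma walk_succ (v : ℕ → ℝ) (n : ℕ) : walk v (n + 1) = walk v n + v n :=
  sum_range_succ v n

lemma walk_sub_walk (v : ℕ → ℝ) {k n : ℕ} (h : k ≤ n) :
    walk v n - walk v k = ∑ i ∈ Ico k n, v i :=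
  (sum_Ico_eq_sub v h).symm

lemma walk_shift (v : ℕ → ℝ) (k n : ℕ) :
    walk (fun i ↦ v (k + i)) n = walk v (k + n) - walk v k := by
  rw [walk_sub_walk v (Nat.le_add_right k n), sum_Ico_eq_sum_range, Nat.add_sub_cancel_left]
  rfl

def revAt (n i : ℕ) : ℕ := if i < n then n - 1 - i else i

lemma revAt_injective (n : ℕ) : Function.Injective (revAt n) := by
  intro i j h
  simp only [revAt] at h
  split_ifs at h <;> omega

lemma walk_comp_revAt (v : ℕ → ℝ) {n k : ℕ} (hk : k ≤ n) :
    walk (v ∘ revAt n) k = walk v n - walk v (n - k) := by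
  rw [walk_sub_walk v (Nat.sub_le n k), walk]
  obtain _ | n := n
  · simp_all
  have h := sum_Ico_reflect v 0 (n := n) hk
  rw [Nat.sub_zero] at h
  rw [← h, range_eq_Ico]
  refine sum_congr rfl fun i hi ↦ ?_
  rw [Finset.mem_Ico] at hi
  simp only [Function.comp, revAt, if_pos (show i < n + 1 by omega), Nat.add_sub_cancel]

def runMax (v : ℕ → ℝ) (n : ℕ) : ℝ := (range (n + 1)).sup' nonempty_range_add_one (walk v)

lemma walk_le_runMax (v : ℕ → ℝ) {i n : ℕ} (h : i ≤ n) : walk v i ≤ runMax v n :=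
  le_sup' (walk v) (mem_range.2 (Nat.lt_succ_of_le h))

lemma exists_runMax_eq_walk (v : ℕ → ℝ) (n : ℕ) : ∃ i ≤ n, runMax v n = walk v i := by
  obtain ⟨i, hi, h⟩ := exists_mem_eq_sup' nonempty_range_add_one (walk v)
  exact ⟨i, Nat.lt_succ_iff.1 (mem_range.1 hi), h⟩

lemma runMax_mono (v : ℕ → ℝ) : Monotone (runMax v) := fun _ _ h ↦
  sup'_mono _ (range_subset_range.2 (Nat.succ_le_succ h)) _

def ladderStep (y : ℝ) (j : ℕ) : Set (ℕ → ℝ) :=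
  {v | (∀ i ≤ j, walk v i < walk v j + y) ∧ 2 * y ≤ v j}

lemma runMax_add_le_of_mem_ladderStep {y : ℝ} {v : ℕ → ℝ} {j : ℕ} (hv : v ∈ ladderStep y j) :
    runMax v j + y ≤ runMax v (j + 1) := by
  obtain ⟨i, hi, hmax⟩ := exists_runMax_eq_walk v j
  have := walk_le_runMax v (le_refl (j + 1))
  rw [walk_succ] at this
  linarith [hv.1 i hi, hv.2]

lemma sum_indicator_ladderStep_le_runMax (y : ℝ) (v : ℕ → ℝ) (n : ℕ) :
    ∑ j ∈ range n, y * (ladderStep y j).indicator 1 v ≤ runMax v n := by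
  have hstep : ∀ j ∈ range n,
      y * (ladderStep y j).indicator 1 v ≤ runMax v (j + 1) - runMax v j := by
    intro j _
    by_cases hv : v ∈ ladderStep y j
    · simp only [Set.indicator_of_mem hv, Pi.one_apply, mul_one]
      linarith [runMax_add_le_of_mem_ladderStep hv]
    · simp only [Set.indicator_of_notMem hv, mul_zero, sub_nonneg]
      exact runMax_mono v (Nat.le_succ j)
  calc ∑ j ∈ range n, y * (ladderStep y j).indicator 1 v
      ≤ ∑ j ∈ range n, (runMax v (j + 1) - runMax v j) := sum_le_sum hstep
    _ = runMax v n - runMax v 0 := sum_range_sub _ n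
    _ ≤ runMax v n := by simp [runMax]

def staysAbove (y : ℝ) (n : ℕ) : Set (ℕ → ℝ) := {v | ∀ i ≤ n, -y < walk v i}

def window (c y : ℝ) (m : ℕ) : Set (ℕ → ℝ) :=
  staysAbove (c + y) m ∩ {v | ∃ j ≤ m, walk v j ≤ -c}

def firstHit (T : Set ℝ) (k : ℕ) : Set (ℕ → ℝ) :=
  {v | (∀ i < k, walk v i ∉ T) ∧ walk v k ∈ T}

open Function in
lemma pairwise_disjoint_firstHit (T : Set ℝ) : Pairwise (Disjoint on firstHit T) := by
  intro k k' hkk'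
  refine Set.disjoint_left.2 fun v hv hv' ↦ ?_
  rcases hkk'.lt_or_gt with h | h
  · exact hv'.1 k h hv.2
  · exact hv.1 k' h hv'.2

lemma exists_mem_firstHit {T : Set ℝ} {v : ℕ → ℝ} {j : ℕ} (h : walk v j ∈ T) :
    ∃ k ≤ j, v ∈ firstHit T k := by
  classical
  have hex : ∃ i, walk v i ∈ T := ⟨j, h⟩
  exact ⟨Nat.find hex, Nat.find_min' hex h, fun i hi ↦ Nat.find_min hex hi, Nat.find_spec hex⟩

lemma exists_firstHit_of_mem_window {c y : ℝ} {v : ℕ → ℝ} {m : ℕ} (hv : v ∈ window c y m) :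
    ∃ k ≤ m, v ∈ firstHit (Set.Iic (-c)) k ∧ ∀ i ≤ m - k, -y < walk v (k + i) - walk v k := by
  obtain ⟨hv, j, hjm, hj⟩ := hv
  obtain ⟨k, hkj, hk⟩ := exists_mem_firstHit (T := Set.Iic (-c)) hj
  refine ⟨k, hkj.trans hjm, hk, fun i hi ↦ ?_⟩
  have := hv (k + i) (by omega)
  have : walk v k ≤ -c := hk.2
  linarith

lemma exists_mem_window {x y : ℝ} (hy : 0 < y) {v : ℕ → ℝ} {m : ℕ}
    (hv : ∀ j ≤ m, 0 ≤ x + walk v j) : ∃ ℓ < ⌊x / y⌋₊ + 1, v ∈ window (ℓ * y) y m := by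
  obtain ⟨j, hj, hmin⟩ := exists_mem_eq_inf' nonempty_range_add_one (walk v)
  set s := (range (m + 1)).inf' nonempty_range_add_one (walk v)
  have hs : ∀ i ≤ m, s ≤ walk v i := fun i hi ↦ inf'_le _ (mem_range.2 (by omega))
  have hj : j ≤ m := by simpa [Nat.lt_succ_iff] using hj
  have hs0 : s ≤ 0 := walk_zero v ▸ hs 0 (Nat.zero_le m)
  refine ⟨⌊-s / y⌋₊, ?_, fun i hi ↦ ?_, j, hj, ?_⟩
  · have : -s / y ≤ x / y := div_le_div_of_nonneg_right (by linarith [hv j hj]) hy.le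
    exact Nat.lt_succ_of_le (Nat.floor_le_floor this)
  · have := (div_lt_iff₀ hy).1 (Nat.lt_floor_add_one (-s / y))
    linarith [hs i hi]
  · have := (le_div_iff₀ hy).1 (Nat.floor_le (div_nonneg (neg_nonneg.2 hs0) hy.le))
    linarith

lemma measurable_cylinderEvents_sum {s : Set ℕ} {I : Finset ℕ} (h : ∀ i ∈ I, i ∈ s) :
    Measurable[cylinderEvents s] fun v : ℕ → ℝ ↦ ∑ i ∈ I, v i :=
  Finset.measurable_sum I fun i hi ↦ measurable_cylinderEvent_apply (h i hi)

lemma measurable_walk_cylinderEvents_Iio {j k : ℕ} (h : j ≤ k) :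
    Measurable[cylinderEvents (Set.Iio k)] (walk · j) :=
  measurable_cylinderEvents_sum fun _ hi ↦ Set.mem_Iio.2 ((mem_range.1 hi).trans_le h)

lemma measurable_walk_sub_cylinderEvents_Ici {j k : ℕ} (h : k ≤ j) :
    Measurable[cylinderEvents (Set.Ici k)] fun v ↦ walk v j - walk v k := by
  simp_rw [walk_sub_walk _ h]
  exact measurable_cylinderEvents_sum fun i hi ↦ Set.mem_Ici.2 (Finset.mem_Ico.1 hi).1

lemma measurable_walk (n : ℕ) : Measurable (walk · n) :=
  Finset.measurable_sum _ fun i _ ↦ measurable_pi_apply i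

lemma measurable_runMax (n : ℕ) : Measurable (runMax · n) :=
  measurable_range_sup'' fun i _ ↦ measurable_walk i

lemma measurableSet_firstHit {T : Set ℝ} (hT : MeasurableSet T) (k : ℕ) :
    MeasurableSet[cylinderEvents (Set.Iio k)] (firstHit T k) := by
  have : firstHit T k = (⋂ i ∈ Set.Iio k, (walk · i) ⁻¹' Tᶜ) ∩ (walk · k) ⁻¹' T := by
    ext v; simp [firstHit]
  rw [this]
  exact (MeasurableSet.biInter (Set.to_countable _) fun i hi ↦
    measurable_walk_cylinderEvents_Iio (le_of_lt hi) hT.compl).inter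
    (measurable_walk_cylinderEvents_Iio le_rfl hT)

lemma measurableSet_staysAbove (y : ℝ) (n : ℕ) : MeasurableSet (staysAbove y n) := by
  simp only [staysAbove, Set.ofPred_forall]
  exact MeasurableSet.iInter fun i ↦ MeasurableSet.iInter fun _ ↦
    measurableSet_lt measurable_const (measurable_walk i)

lemma measurableSet_reversed_staysAbove (j : ℕ) (y : ℝ) :
    MeasurableSet[cylinderEvents (Set.Iio j)] {v | ∀ i ≤ j, walk v i < walk v j + y} := by
  simp only [Set.ofPred_forall]
  exact MeasurableSet.iInter fun i ↦ MeasurableSet.iInter fun hi ↦ measurableSet_lt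
    (measurable_walk_cylinderEvents_Iio hi)
    ((measurable_walk_cylinderEvents_Iio le_rfl).add_const y)

lemma measurableSet_preimage_apply {T : Set ℝ} (hT : MeasurableSet T) (j : ℕ) :
    MeasurableSet[cylinderEvents (Set.Ici j)] ((fun v : ℕ → ℝ ↦ v j) ⁻¹' T) :=
  measurable_cylinderEvent_apply (Set.mem_Ici.2 le_rfl) hT

lemma measurableSet_ladderStep (y : ℝ) (j : ℕ) : MeasurableSet (ladderStep y j) :=
  (cylinderEvents_le_pi _ (measurableSet_reversed_staysAbove j y)).inter
    (cylinderEvents_le_pi _ (measurableSet_preimage_apply measurableSet_Ici j))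

lemma measurableSet_walk_sub_ge (a : ℝ) {k n : ℕ} (hkn : k ≤ n) :
    MeasurableSet[cylinderEvents (Set.Ici k)] {v | -a ≤ walk v n - walk v k} :=
  measurableSet_le measurable_const (measurable_walk_sub_cylinderEvents_Ici hkn)

lemma measurableSet_walk_ge (x : ℝ) (n : ℕ) :
    MeasurableSet {v : ℕ → ℝ | ∀ j ≤ n, 0 ≤ x + walk v j} := by
  simp only [Set.ofPred_forall]
  exact MeasurableSet.iInter fun j ↦ MeasurableSet.iInter fun _ ↦
    measurableSet_le measurable_const (measurable_const.add (measurable_walk j))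

section CanonicalSpace

variable {ν : Measure ℝ} [IsProbabilityMeasure ν]
local notation "𝐏" => Measure.infinitePi fun _ : ℕ ↦ ν

lemma indep_cylinderEvents {s t : Set ℕ} (hst : Disjoint s t) :
    Indep (cylinderEvents s) (cylinderEvents t) 𝐏 :=
  indep_iSup_of_disjoint (fun i ↦ (measurable_pi_apply i).comap_le)
    ((iIndepFun_iff_iIndep _ _ _).1
      (iIndepFun_infinitePi (X := fun _ x ↦ x) fun _ ↦ measurable_id)) hst

lemma measureReal_inter_eq_mul_of_Iio_Ici {A B : Set (ℕ → ℝ)} {k : ℕ}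
    (hA : MeasurableSet[cylinderEvents (Set.Iio k)] A)
    (hB : MeasurableSet[cylinderEvents (Set.Ici k)] B) :
    𝐏.real (A ∩ B) = 𝐏.real A * 𝐏.real B := by
  rw [measureReal_def, (Indep_iff _ _ _).1 (indep_cylinderEvents (Set.Iio_disjoint_Ici le_rfl))
    A B hA hB, ENNReal.toReal_mul]
  rfl

lemma measureReal_preimage_comp_injective {e : ℕ → ℕ} (he : Function.Injective e)
    {A : Set (ℕ → ℝ)} (hA : MeasurableSet A) :
    𝐏.real ((fun v i ↦ v (e i)) ⁻¹' A) = 𝐏.real A := by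
  rw [measureReal_def, measureReal_def, ← Measure.map_apply (by fun_prop) hA,
    Measure.map_infinitePi_infinitePi_of_inj he]

lemma measureReal_increments_staysAbove (k j : ℕ) (y : ℝ) :
    𝐏.real {v | ∀ i ≤ j, -y < walk v (k + i) - walk v k} = 𝐏.real (staysAbove y j) := by
  rw [← measureReal_preimage_comp_injective (add_right_injective k) (measurableSet_staysAbove y j)]
  congr 1
  ext v
  simp [staysAbove, walk_shift]

lemma measureReal_reversed_staysAbove (j : ℕ) (y : ℝ) :
    𝐏.real {v | ∀ i ≤ j, walk v i < walk v j + y} = 𝐏.real (staysAbove y j) := by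
  rw [← measureReal_preimage_comp_injective (revAt_injective j) (measurableSet_staysAbove y j)]
  congr 1
  ext v
  simp only [staysAbove, Set.mem_ofPred_eq, Set.mem_preimage]
  have hrev : ∀ i ≤ j, walk (fun k ↦ v (revAt j k)) i = walk v j - walk v (j - i) :=
    fun i hi ↦ walk_comp_revAt v hi
  refine ⟨fun h i hi ↦ ?_, fun h i hi ↦ ?_⟩
  · linarith [h (j - i) (Nat.sub_le j i), hrev i hi]
  · have := h (j - i) (Nat.sub_le j i)
    rw [hrev _ (Nat.sub_le j i), Nat.sub_sub_self hi] at this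
    linarith

lemma measureReal_ladderStep (y : ℝ) (j : ℕ) :
    𝐏.real (ladderStep y j) = 𝐏.real (staysAbove y j) * ν.real (Set.Ici (2 * y)) := by
  rw [show ladderStep y j = {v | ∀ i ≤ j, walk v i < walk v j + y} ∩
      (fun v : ℕ → ℝ ↦ v j) ⁻¹' Set.Ici (2 * y) from rfl,
    measureReal_inter_eq_mul_of_Iio_Ici (measurableSet_reversed_staysAbove j y)
      (measurableSet_preimage_apply measurableSet_Ici j), measureReal_reversed_staysAbove]
  exact congrArg _ ((measurePreserving_eval_infinitePi _ j).measureReal_preimage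
    measurableSet_Ici.nullMeasurableSet)

lemma measureReal_le_abs_walk_sub_le (h2 : MemLp id 2 ν) (hmean : ∫ x, x ∂ν = 0) {k n : ℕ}
    (hkn : k ≤ n) {t : ℝ} (ht : 0 < t) :
    𝐏.real {v | t ≤ |walk v n - walk v k|} ≤ (n - k : ℕ) * variance id ν / t ^ 2 := by
  have hmap : ∀ i, 𝐏.map (fun v ↦ v i) = ν := fun i ↦
    (measurePreserving_eval_infinitePi _ i).map_eq
  have hcoord : ∀ i, MemLp (fun v : ℕ → ℝ ↦ v i) 2 𝐏 := fun i ↦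
    h2.comp_measurePreserving (measurePreserving_eval_infinitePi _ i)
  have hmean_coord : ∀ i, ∫ v, v i ∂𝐏 = 0 := fun i ↦ by
    have := integral_map (f := fun x : ℝ ↦ x) (measurable_pi_apply i).aemeasurable
      measurable_id.aestronglyMeasurable (μ := 𝐏)
    rwa [hmap i, hmean, eq_comm] at this
  have hvar_coord : ∀ i, variance (fun v : ℕ → ℝ ↦ v i) 𝐏 = variance id ν := fun i ↦ by
    rw [← variance_id_map (measurable_pi_apply i).aemeasurable, hmap i]
  set Y := ∑ i ∈ Ico k n, fun v : ℕ → ℝ ↦ v i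
  have hY : MemLp Y 2 𝐏 := memLp_finsetSum' _ fun i _ ↦ hcoord i
  have hmeanY : 𝐏[Y] = 0 := by
    simp only [Y, Finset.sum_apply]
    rw [integral_finsetSum _ fun i _ ↦ (hcoord i).integrable one_le_two]
    exact sum_eq_zero fun i _ ↦ hmean_coord i
  have hvarY : variance Y 𝐏 = (n - k : ℕ) * variance id ν := by
    rw [IndepFun.variance_sum (fun i _ ↦ hcoord i) fun i _ j _ hij ↦
      (iIndepFun_infinitePi (X := fun _ x ↦ x) fun _ ↦ measurable_id).indepFun hij]
    simp [hvar_coord]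
  have hset : {v | t ≤ |walk v n - walk v k|} = {v | t ≤ |Y v - 𝐏[Y]|} := by
    rw [hmeanY]
    ext v
    simp [walk_sub_walk v hkn, Y]
  rw [hset, measureReal_def, ← hvarY,
    ← ENNReal.toReal_ofReal (div_nonneg (variance_nonneg Y 𝐏) (sq_nonneg t))]
  exact ENNReal.toReal_mono ENNReal.ofReal_ne_top (meas_ge_le_variance_div_sq hY ht)

/-- An Ottaviani-type maximal inequality. -/
lemma measureReal_le_runMax_le_two_mul {n : ℕ} {c a : ℝ}
    (hhalf : ∀ k ≤ n, 1 / 2 ≤ 𝐏.real {v | -a ≤ walk v n - walk v k}) :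
    𝐏.real {v | c ≤ runMax v n} ≤ 2 * 𝐏.real {v | c - a ≤ walk v n} := by
  set C := firstHit (Set.Ici c)
  set D := fun k ↦ {v | -a ≤ walk v n - walk v k}
  have hcover : {v | c ≤ runMax v n} ⊆ ⋃ k ∈ range (n + 1), C k := by
    intro v hv
    obtain ⟨j, hj, hmax⟩ := exists_runMax_eq_walk v n
    obtain ⟨k, hkj, hk⟩ := exists_mem_firstHit (T := Set.Ici c) (hmax ▸ hv : walk v j ∈ Set.Ici c)
    exact Set.mem_biUnion (mem_range.2 (by omega)) hk
  have hhit : ∀ k ∈ range (n + 1), 𝐏.real (C k) ≤ 2 * 𝐏.real (C k ∩ D k) := by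
    intro k hk
    have hkn := Nat.lt_succ_iff.1 (mem_range.1 hk)
    rw [measureReal_inter_eq_mul_of_Iio_Ici (measurableSet_firstHit measurableSet_Ici k)
      (measurableSet_walk_sub_ge a hkn)]
    nlinarith [hhalf k hkn, measureReal_nonneg (μ := 𝐏) (s := C k)]
  have hdisj : (↑(range (n + 1)) : Set ℕ).PairwiseDisjoint fun k ↦ C k ∩ D k :=
    fun k _ k' _ hkk' ↦ ((pairwise_disjoint_firstHit _ hkk').mono Set.inter_subset_left
      Set.inter_subset_left)
  have hmeas : ∀ k ∈ range (n + 1), MeasurableSet (C k ∩ D k) := fun k hk ↦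
    (cylinderEvents_le_pi _ (measurableSet_firstHit measurableSet_Ici k)).inter
      (cylinderEvents_le_pi _ (measurableSet_walk_sub_ge a (Nat.lt_succ_iff.1 (mem_range.1 hk))))
  have hunion : ⋃ k ∈ range (n + 1), C k ∩ D k ⊆ {v | c - a ≤ walk v n} := by
    refine Set.iUnion₂_subset fun k _ v hv ↦ ?_
    have : c ≤ walk v k := hv.1.2
    have : -a ≤ walk v n - walk v k := hv.2
    show c - a ≤ walk v n
    linarith
  calc 𝐏.real {v | c ≤ runMax v n}
      ≤ ∑ k ∈ range (n + 1), 𝐏.real (C k) :=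
        (measureReal_mono hcover (measure_ne_top _ _)).trans (measureReal_biUnion_finset_le _ _)
    _ ≤ ∑ k ∈ range (n + 1), 2 * 𝐏.real (C k ∩ D k) := sum_le_sum hhit
    _ = 2 * 𝐏.real (⋃ k ∈ range (n + 1), C k ∩ D k) := by
        rw [← mul_sum, measureReal_biUnion_finset hdisj hmeas]
    _ ≤ 2 * 𝐏.real {v | c - a ≤ walk v n} := by
        gcongr; exact measure_ne_top _ _

lemma half_le_measureReal_walk_sub_ge (h2 : MemLp id 2 ν) (hmean : ∫ x, x ∂ν = 0) {n : ℕ}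
    {a : ℝ} (ha : 0 < a) (hna : 2 * n * variance id ν ≤ a ^ 2) {k : ℕ} (hkn : k ≤ n) :
    1 / 2 ≤ 𝐏.real {v | -a ≤ walk v n - walk v k} := by
  have hsub : {v | -a ≤ walk v n - walk v k}ᶜ ⊆ {v | a ≤ |walk v n - walk v k|} :=
    fun v hv ↦ by
      simp only [Set.mem_compl_iff, Set.mem_ofPred_eq, not_le] at hv
      exact (by linarith : a ≤ -(walk v n - walk v k)).trans (neg_le_abs _)
  have hcheb := (measureReal_mono hsub (measure_ne_top _ _)).trans
    (measureReal_le_abs_walk_sub_le h2 hmean hkn ha)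
  rw [probReal_compl_eq_one_sub (cylinderEvents_le_pi _ (measurableSet_walk_sub_ge a hkn))]
    at hcheb
  have : ((n - k : ℕ) : ℝ) * variance id ν / a ^ 2 ≤ 1 / 2 := by
    rw [div_le_iff₀ (by positivity)]
    have : ((n - k : ℕ) : ℝ) ≤ n := by exact_mod_cast Nat.sub_le n k
    nlinarith [variance_nonneg id ν]
  linarith

lemma measureReal_mul_le_runMax_le (h2 : MemLp id 2 ν) (hmean : ∫ x, x ∂ν = 0) {n : ℕ}
    {a r : ℝ} (ha : 0 < a) (hna : 2 * n * variance id ν ≤ a ^ 2) (hr : 1 ≤ r) :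
    𝐏.real {v | r * a ≤ runMax v n} ≤ 4 / r ^ 2 := by
  rcases lt_or_ge r 2 with hr2 | hr2
  · refine measureReal_le_one.trans ?_
    rw [le_div_iff₀ (by positivity)]
    nlinarith
  have hr1 : 0 < (r - 1) * a := mul_pos (by linarith) ha
  have htail : {v | r * a - a ≤ walk v n} ⊆ {v | (r - 1) * a ≤ |walk v n - walk v 0|} :=
    fun v hv ↦ by
      simp only [Set.mem_ofPred_eq, walk_zero, sub_zero] at hv ⊢
      exact (by linarith : (r - 1) * a ≤ walk v n).trans (le_abs_self _)
  calc 𝐏.real {v | r * a ≤ runMax v n}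
      ≤ 2 * 𝐏.real {v | r * a - a ≤ walk v n} := measureReal_le_runMax_le_two_mul
        fun k hk ↦ half_le_measureReal_walk_sub_ge h2 hmean ha hna hk
    _ ≤ 2 * (n * variance id ν / ((r - 1) * a) ^ 2) := by
        gcongr
        refine (measureReal_mono htail (measure_ne_top _ _)).trans ?_
        simpa using measureReal_le_abs_walk_sub_le h2 hmean (Nat.zero_le n) hr1
    _ ≤ 1 / (r - 1) ^ 2 := by
        rw [← mul_div_assoc, div_le_div_iff₀ (pow_pos hr1 2) (pow_pos (by linarith) 2), mul_pow]
        nlinarith [sq_nonneg (r - 1)]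
    _ ≤ 4 / r ^ 2 := by
        rw [div_le_div_iff₀ (pow_pos (by linarith) 2) (by positivity)]
        nlinarith

lemma sum_mul_measureReal_runMax_le (h2 : MemLp id 2 ν) (hmean : ∫ x, x ∂ν = 0) {n : ℕ}
    {a : ℝ} (ha : 0 < a) (hna : 2 * n * variance id ν ≤ a ^ 2) (R : ℕ) :
    ∑ r ∈ Icc 1 R, a * 𝐏.real {v | r * a ≤ runMax v n} ≤ 8 * a :=
  calc ∑ r ∈ Icc 1 R, a * 𝐏.real {v | r * a ≤ runMax v n}
      ≤ ∑ r ∈ Icc 1 R, a * (4 / (r : ℝ) ^ 2) := by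
        gcongr with r hr
        exact measureReal_mul_le_runMax_le h2 hmean ha hna
          (by exact_mod_cast (Finset.mem_Icc.1 hr).1)
    _ = 4 * a * ∑ r ∈ Ioo 0 (R + 1), ((r : ℝ) ^ 2)⁻¹ := by
        rw [mul_sum, show Ioo 0 (R + 1) = Icc 1 R by ext; simp; omega]
        exact sum_congr rfl fun r _ ↦ by ring
    _ ≤ 4 * a * 2 := by
        gcongr
        simpa using sum_Ioo_inv_sq_le (α := ℝ) 0 (R + 1)
    _ = 8 * a := by ring

lemma mul_sum_measureReal_staysAbove_le (h2 : MemLp id 2 ν) (hmean : ∫ x, x ∂ν = 0) {y a : ℝ}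
    (hy : 0 < y) (ha : 0 < a) {n : ℕ} (hna : 2 * n * variance id ν ≤ a ^ 2) :
    y * ν.real (Set.Ici (2 * y)) * ∑ j ∈ range n, 𝐏.real (staysAbove y j) ≤ 9 * a := by
  set R := ⌈n * y / a⌉₊
  have hpath : ∀ v, ∑ j ∈ range n, y * (ladderStep y j).indicator 1 v
      ≤ a + ∑ r ∈ Icc 1 R, a * {v | r * a ≤ runMax v n}.indicator 1 v := by
    intro v
    have hcount : ∑ j ∈ range n, y * (ladderStep y j).indicator 1 v ≤ R * a :=
      calc ∑ j ∈ range n, y * (ladderStep y j).indicator 1 v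
          ≤ ∑ j ∈ range n, y := sum_le_sum fun j _ ↦
            mul_le_of_le_one_right hy.le (Set.indicator_le_self' (fun _ _ ↦ zero_le_one) v)
        _ = n * y := by simp
        _ ≤ R * a := (div_le_iff₀ ha).1 (Nat.le_ceil _)
    simpa [Set.indicator_apply] using
      le_add_sum_ite_le R ha (sum_indicator_ladderStep_le_runMax y v n) hcount
  have hexp := sum_mul_measureReal_le_of_forall_le (μ := 𝐏)
    (fun j _ ↦ measurableSet_ladderStep y j)
    (fun r _ ↦ measurableSet_le measurable_const (measurable_runMax n)) hpath
  have htail := sum_mul_measureReal_runMax_le h2 hmean ha hna R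
  calc y * ν.real (Set.Ici (2 * y)) * ∑ j ∈ range n, 𝐏.real (staysAbove y j)
      = ∑ j ∈ range n, y * 𝐏.real (ladderStep y j) := by
        simp_rw [measureReal_ladderStep, mul_sum]
        exact sum_congr rfl fun j _ ↦ by ring
    _ ≤ 9 * a := by linarith
lemma sum_measureReal_window_le (c y : ℝ) (n : ℕ) :
    ∑ m ∈ range n, 𝐏.real (window c y m) ≤ ∑ j ∈ range n, 𝐏.real (staysAbove y j) := by
  set H := firstHit (Set.Iic (-c))
  set G := fun k j ↦ {v | ∀ i ≤ j, -y < walk v (k + i) - walk v k}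
  have hcover : ∀ m, window c y m ⊆ ⋃ k ∈ range (m + 1), H k ∩ G k (m - k) := fun m v hv ↦ by
    obtain ⟨k, hkm, hk, hinc⟩ := exists_firstHit_of_mem_window hv
    exact Set.mem_biUnion (mem_range.2 (Nat.lt_succ_of_le hkm)) ⟨hk, hinc⟩
  have hG : ∀ k j, MeasurableSet[cylinderEvents (Set.Ici k)] (G k j) := fun k j ↦ by
    simp only [G, Set.ofPred_forall]
    exact MeasurableSet.iInter fun i ↦ MeasurableSet.iInter fun _ ↦ measurableSet_lt
      measurable_const (measurable_walk_sub_cylinderEvents_Ici (Nat.le_add_right k i))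
  have hprod : ∀ k j, 𝐏.real (H k ∩ G k j) = 𝐏.real (H k) * 𝐏.real (staysAbove y j) :=
    fun k j ↦ by
      rw [measureReal_inter_eq_mul_of_Iio_Ici (measurableSet_firstHit measurableSet_Iic k) (hG k j),
        measureReal_increments_staysAbove]
  have hH : ∑ k ∈ range n, 𝐏.real (H k) ≤ 1 := by
    rw [← measureReal_biUnion_finset (fun k _ k' _ hkk' ↦ pairwise_disjoint_firstHit _ hkk')
      fun k _ ↦ cylinderEvents_le_pi _ (measurableSet_firstHit measurableSet_Iic k)]
    exact measureReal_le_one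
  calc ∑ m ∈ range n, 𝐏.real (window c y m)
      ≤ ∑ m ∈ range n, ∑ k ∈ range (m + 1), 𝐏.real (H k) * 𝐏.real (staysAbove y (m - k)) := by
        gcongr with m
        refine (measureReal_mono (hcover m) (measure_ne_top _ _)).trans ?_
        exact (measureReal_biUnion_finset_le _ _).trans_eq (sum_congr rfl fun k _ ↦ hprod _ _)
    _ ≤ (∑ k ∈ range n, 𝐏.real (H k)) * ∑ j ∈ range n, 𝐏.real (staysAbove y j) :=
        sum_range_sum_range_succ_mul_le (fun _ ↦ measureReal_nonneg) (fun _ ↦ measureReal_nonneg) n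
    _ ≤ ∑ j ∈ range n, 𝐏.real (staysAbove y j) :=
        mul_le_of_le_one_left (sum_nonneg fun _ _ ↦ measureReal_nonneg) hH

lemma mul_measureReal_walk_ge_le {x y : ℝ} (hy : 0 < y) (n : ℕ) :
    n * 𝐏.real {v | ∀ j ≤ n, 0 ≤ x + walk v j}
      ≤ (⌊x / y⌋₊ + 1) * ∑ j ∈ range n, 𝐏.real (staysAbove y j) := by
  set L := ⌊x / y⌋₊ + 1
  have hcover : ∀ m, {v | ∀ j ≤ m, 0 ≤ x + walk v j} ⊆ ⋃ ℓ ∈ range L, window (ℓ * y) y m :=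
    fun m v hv ↦ by
      obtain ⟨ℓ, hℓ, hv⟩ := exists_mem_window hy hv
      exact Set.mem_biUnion (mem_range.2 hℓ) hv
  calc n * 𝐏.real {v | ∀ j ≤ n, 0 ≤ x + walk v j}
      = ∑ m ∈ range n, 𝐏.real {v | ∀ j ≤ n, 0 ≤ x + walk v j} := by simp
    _ ≤ ∑ m ∈ range n, 𝐏.real {v | ∀ j ≤ m, 0 ≤ x + walk v j} :=
        sum_le_sum fun m hm ↦ measureReal_mono
          (fun v hv j hj ↦ hv j (hj.trans (mem_range.1 hm).le)) (measure_ne_top _ _)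
    _ ≤ ∑ m ∈ range n, ∑ ℓ ∈ range L, 𝐏.real (window (ℓ * y) y m) := by
        gcongr with m
        exact (measureReal_mono (hcover m) (measure_ne_top _ _)).trans
          (measureReal_biUnion_finset_le _ _)
    _ = ∑ ℓ ∈ range L, ∑ m ∈ range n, 𝐏.real (window (ℓ * y) y m) := sum_comm
    _ ≤ ∑ ℓ ∈ range L, ∑ j ∈ range n, 𝐏.real (staysAbove y j) :=
        sum_le_sum fun ℓ _ ↦ sum_measureReal_window_le _ y n
    _ = (⌊x / y⌋₊ + 1) * ∑ j ∈ range n, 𝐏.real (staysAbove y j) := by simp [L]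

lemma exists_pos_measureReal_Ici (h2 : MemLp id 2 ν) (hmean : ∫ x, x ∂ν = 0)
    (hvar : 0 < variance id ν) : ∃ β > 0, 0 < ν.real (Set.Ici β) := by
  have hIoi : ν (Set.Ioi 0) ≠ 0 := by
    intro h0
    have hle : 0 ≤ᵐ[ν] -id := (measure_eq_zero_iff_ae_notMem.1 h0).mono fun x hx ↦ by
      simpa using hx
    have hzero : id =ᵐ[ν] 0 := by
      have hint : ∫ x, (-id) x ∂ν = 0 := by
        simp only [Pi.neg_apply, id]
        rw [integral_neg, hmean, neg_zero]
      filter_upwards [(integral_eq_zero_iff_of_nonneg_ae hle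
        (h2.integrable one_le_two).neg).1 hint] with x hx
      simpa using hx
    exact hvar.ne' (by rw [variance_congr hzero, variance_zero])
  have hunion : Set.Ioi (0 : ℝ) = ⋃ k : ℕ, Set.Ici (1 / (k + 1 : ℝ)) := by
    ext x
    simp only [Set.mem_Ioi, Set.mem_iUnion, Set.mem_Ici]
    refine ⟨fun hx ↦ (exists_nat_one_div_lt hx).imp fun _ h ↦ h.le, fun ⟨k, hk⟩ ↦ ?_⟩
    exact lt_of_lt_of_le (by positivity) hk
  obtain ⟨k, hk⟩ := exists_measure_pos_of_not_measure_iUnion_null (hunion ▸ hIoi)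
  exact ⟨1 / (k + 1), by positivity, ENNReal.toReal_pos hk.ne' (measure_ne_top _ _)⟩

lemma sum_measureReal_staysAbove_le_mul_sqrt (h2 : MemLp id 2 ν) (hmean : ∫ x, x ∂ν = 0)
    (hvar : 0 < variance id ν) {y : ℝ} (hy : 0 < y) (hp : 0 < ν.real (Set.Ici (2 * y))) (n : ℕ) :
    ∑ j ∈ range n, 𝐏.real (staysAbove y j)
      ≤ 9 * √(2 * variance id ν) / (y * ν.real (Set.Ici (2 * y))) * √n := by
  rcases n.eq_zero_or_pos with rfl | hn
  · simp
  have ha : 0 < √(2 * variance id ν) * √n := by positivity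
  have hna : 2 * n * variance id ν ≤ (√(2 * variance id ν) * √n) ^ 2 := by
    rw [mul_pow, Real.sq_sqrt (by positivity), Real.sq_sqrt n.cast_nonneg]
    linarith
  have := mul_sum_measureReal_staysAbove_le h2 hmean hy ha hna
  rw [div_mul_eq_mul_div, le_div_iff₀ (by positivity)]
  linarith

theorem exists_measureReal_walk_ge_le (h2 : MemLp id 2 ν) (hmean : ∫ x, x ∂ν = 0)
    (hvar : 0 < variance id ν) :
    ∃ α > (0 : ℝ), ∀ x : ℝ, 0 ≤ x → ∀ n : ℕ, 1 ≤ n →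
      𝐏.real {v | ∀ j ≤ n, 0 ≤ x + walk v j} ≤ α * (1 + x) * (n : ℝ) ^ (-(1 / 2 : ℝ)) := by
  obtain ⟨β, hβ, hp⟩ := exists_pos_measureReal_Ici h2 hmean hvar
  set y := β / 2
  have hy : 0 < y := half_pos hβ
  have h2y : 2 * y = β := mul_div_cancel₀ β two_ne_zero
  set K := 9 * √(2 * variance id ν) / (y * ν.real (Set.Ici (2 * y)))
  have hK : 0 < K := by simp only [K, h2y]; positivity
  refine ⟨(y⁻¹ + 1) * K, by positivity, fun x hx n hn ↦ ?_⟩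
  have hsqrt : 0 < √(n : ℝ) := Real.sqrt_pos.2 (by exact_mod_cast hn)
  have hL : (⌊x / y⌋₊ + 1 : ℝ) ≤ (y⁻¹ + 1) * (1 + x) :=
    calc (⌊x / y⌋₊ + 1 : ℝ) ≤ x * y⁻¹ + 1 := by
          rw [← div_eq_mul_inv]; gcongr; exact Nat.floor_le (div_nonneg hx hy.le)
      _ ≤ (y⁻¹ + 1) * (1 + x) := by nlinarith [inv_nonneg.2 hy.le]
  set P := 𝐏.real {v | ∀ j ≤ n, 0 ≤ x + walk v j}
  have hbound : n * P ≤ (⌊x / y⌋₊ + 1) * (K * √n) := (mul_measureReal_walk_ge_le hy n).trans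
    (mul_le_mul_of_nonneg_left
      (sum_measureReal_staysAbove_le_mul_sqrt h2 hmean hvar hy (h2y ▸ hp) n) (by positivity))
  have hPK : P * √n ≤ (⌊x / y⌋₊ + 1) * K := by
    refine le_of_mul_le_mul_left ?_ hsqrt
    calc √n * (P * √n) = (√n * √n) * P := by ring
      _ = n * P := by rw [Real.mul_self_sqrt n.cast_nonneg]
      _ ≤ _ := hbound.trans_eq (by ring)
  rw [Real.rpow_neg n.cast_nonneg, ← Real.sqrt_eq_rpow, ← div_eq_mul_inv, le_div_iff₀ hsqrt]
  nlinarith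

end CanonicalSpace

end RandomWalk

/-- There exists a constant `α₁ > 0` such that for every real `x ≥ 0` and every
integer `n ≥ 1`, `P_x(min_{0 ≤ j ≤ n} S_j ≥ 0) ≤ α₁ (1 + x) n^(-1/2)`, where `S` is a centered
random walk with finite positive variance. -/
theorem stmt0 {Ω : Type*} [MeasurableSpace Ω] (μ : Measure Ω) [IsProbabilityMeasure μ]
    (X : ℕ → Ω → ℝ) (hmeas : ∀ i, Measurable (X i))
    (hindep : iIndepFun X μ)
    (hident : ∀ i, IdentDistrib (X i) (X 0) μ μ)
    (hL2 : MemLp (X 0) 2 μ)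
    (hmean : ∫ ω, X 0 ω ∂μ = 0)
    (hvar : 0 < variance (X 0) μ)
    (S : ℕ → Ω → ℝ)
    (hS : ∀ n ω, S n ω = ∑ i ∈ Finset.range n, X i ω) :
    ∃ α₁ > (0:ℝ), ∀ x : ℝ, 0 ≤ x → ∀ n : ℕ, 1 ≤ n →
      (μ {ω | ∀ j ≤ n, 0 ≤ x + S j ω}).toReal ≤ α₁ * (1 + x) * (n : ℝ) ^ (-(1/2 : ℝ)) := by
  have hX0 : AEMeasurable (X 0) μ := (hmeas 0).aemeasurable
  have := Measure.isProbabilityMeasure_map hX0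
  obtain ⟨α, hα, hbound⟩ := RandomWalk.exists_measureReal_walk_ge_le (ν := μ.map (X 0))
    ((memLp_map_measure_iff aestronglyMeasurable_id hX0).2 hL2)
    (by rwa [integral_map (f := fun x ↦ x) hX0 measurable_id.aestronglyMeasurable])
    (by rwa [variance_id_map hX0])
  refine ⟨α, hα, fun x hx n hn ↦ ?_⟩
  have hset : {ω | ∀ j ≤ n, 0 ≤ x + S j ω}
      = (fun ω i ↦ X i ω) ⁻¹' {v | ∀ j ≤ n, 0 ≤ x + RandomWalk.walk v j} := by
    ext ω
    simp [hS, RandomWalk.walk]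
  rw [hset, measure_preimage_seq_eq_infinitePi hmeas hindep hident
    (RandomWalk.measurableSet_walk_ge x n)]
  exact hbound x hx n hn
end

section
/- Let l ≥ 1 and β = (β₁, ..., β_l) ∈ (1, ∞)^l, let c > 0, and suppose that for every nonempty subset J ⊆ {1, ..., l} a measurable function ρ_J: ℝ^J → [0, ∞) is given satisfying (a) ρ_J(δ + x·𝟙) = e^x ρ_J(δ) for all x ∈ ℝ and δ ∈ ℝ^J (where δ + x·𝟙 adds x to every coordinate), and (b) ρ_J(δ) ≤ c · min_{i ∈ J} e^{δ_i} for all δ ∈ ℝ^J. For θ = (θ₁, ..., θ_l) ∈ (0, ∞)^l and 1 ≤ k ≤ l define g_k(θ) := Σ_{J ⊆ {1,...,l}, |J| = k} ( Π_{i ∈ J} β_i θ_i ) · ∫_{ℝ^J} exp( Σ_{i ∈ J} ( −θ_i e^{β_i y_i} + β_i y_i ) ) ρ_J(−y) dy, and F(θ) := Σ_{k=1}^l (−1)^{k+1} g_k(θ). Then for every x ∈ ℝ, F( e^{−β₁ x} θ₁, ..., e^{−β_l x} θ_l ) = e^{−x} F(θ). -/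
open MeasureTheory Filter

/-- The quantity `g_k(θ) = Σ_{J ⊆ {1,...,l}, |J| = k} (Π_{i ∈ J} β_i θ_i) ·
∫_{ℝ^J} exp(Σ_{i ∈ J} (-θ_i e^{β_i y_i} + β_i y_i)) ρ_J(-y) dy`. -/
noncomputable def gAux (l : ℕ) (β θ : Fin l → ℝ)
    (ρ : (J : Finset (Fin l)) → ((↥J) → ℝ) → ℝ) (k : ℕ) : ℝ :=
  ∑ J ∈ Finset.univ.powerset.filter (fun J : Finset (Fin l) => J.card = k),
    (∏ i ∈ J, β i * θ i) *
      ∫ y : (↥J) → ℝ,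
        Real.exp (∑ i : ↥J, (-(θ i.1) * Real.exp (β i.1 * y i) + β i.1 * y i)) * ρ J (-y)

/-- The quantity `F(θ) = Σ_{k=1}^l (-1)^{k+1} g_k(θ)`. -/
noncomputable def FAux (l : ℕ) (β θ : Fin l → ℝ)
    (ρ : (J : Finset (Fin l)) → ((↥J) → ℝ) → ℝ) : ℝ :=
  ∑ k ∈ Finset.Icc 1 l, (-1 : ℝ) ^ (k + 1) * gAux l β θ ρ k

/-- Key scaling identity for a single term. -/
lemma term_scale (l : ℕ) (β θ : Fin l → ℝ)
    (ρ : (J : Finset (Fin l)) → ((↥J) → ℝ) → ℝ)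
    (hρshift : ∀ (J : Finset (Fin l)), J.Nonempty → ∀ (x : ℝ) (δ : (↥J) → ℝ),
      ρ J (fun i => δ i + x) = Real.exp x * ρ J δ)
    (J : Finset (Fin l)) (hJ : J.Nonempty) (x : ℝ) :
    (∏ i ∈ J, β i * (Real.exp (-(β i) * x) * θ i)) *
      ∫ y : (↥J) → ℝ,
        Real.exp (∑ i : ↥J, (-(Real.exp (-(β i.1) * x) * θ i.1) * Real.exp (β i.1 * y i)
          + β i.1 * y i)) * ρ J (-y)
    = Real.exp (-x) * ((∏ i ∈ J, β i * θ i) *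
      ∫ y : (↥J) → ℝ,
        Real.exp (∑ i : ↥J, (-(θ i.1) * Real.exp (β i.1 * y i) + β i.1 * y i)) * ρ J (-y)) := by
  set S : ℝ := ∑ i : ↥J, β i.1 with hS
  have hprod : (∏ i ∈ J, β i * (Real.exp (-(β i) * x) * θ i))
      = Real.exp (-x * S) * ∏ i ∈ J, β i * θ i := by
    calc ∏ i ∈ J, β i * (Real.exp (-(β i) * x) * θ i)
        = ∏ i ∈ J, Real.exp (-(β i) * x) * (β i * θ i) :=
          Finset.prod_congr rfl (fun i _ => by ring)
      _ = (∏ i ∈ J, Real.exp (-(β i) * x)) * ∏ i ∈ J, β i * θ i := Finset.prod_mul_distrib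
      _ = Real.exp (∑ i ∈ J, -(β i) * x) * ∏ i ∈ J, β i * θ i := by rw [Real.exp_sum]
      _ = Real.exp (-x * S) * ∏ i ∈ J, β i * θ i := by
          have : (∑ i ∈ J, -(β i) * x) = -x * S := by
            rw [hS, Finset.sum_coe_sort J (fun i => β i), Finset.mul_sum]
            exact Finset.sum_congr rfl (fun i _ => by ring)
          rw [this]
  have key : ∀ y : (↥J) → ℝ,
      Real.exp (∑ i : ↥J, (-(Real.exp (-(β i.1) * x) * θ i.1)
          * Real.exp (β i.1 * (y i + x)) + β i.1 * (y i + x)))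
        * ρ J (-(y + fun _ : ↥J => x))
      = (Real.exp (x * S) * Real.exp (-x)) *
        (Real.exp (∑ i : ↥J, (-(θ i.1) * Real.exp (β i.1 * y i) + β i.1 * y i)) * ρ J (-y)) := by
    intro y
    have hρ : ρ J (-(y + fun _ : ↥J => x)) = Real.exp (-x) * ρ J (-y) := by
      have h : (-(y + fun _ : ↥J => x)) = fun i : ↥J => (-y) i + (-x) := by
        funext i; simp only [Pi.neg_apply, Pi.add_apply]; ring
      rw [h, hρshift J hJ]
    have hexp : (∑ i : ↥J, (-(Real.exp (-(β i.1) * x) * θ i.1)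
          * Real.exp (β i.1 * (y i + x)) + β i.1 * (y i + x)))
        = (∑ i : ↥J, (-(θ i.1) * Real.exp (β i.1 * y i) + β i.1 * y i)) + x * S := by
      rw [hS, Finset.mul_sum, ← Finset.sum_add_distrib]
      refine Finset.sum_congr rfl (fun i _ => ?_)
      have hE : Real.exp (-(β i.1) * x) * Real.exp (β i.1 * x) = 1 := by
        rw [← Real.exp_add, neg_mul, neg_add_cancel, Real.exp_zero]
      have h1 : Real.exp (β i.1 * (y i + x)) = Real.exp (β i.1 * y i) * Real.exp (β i.1 * x) := by
        rw [← Real.exp_add, mul_add]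
      rw [h1]
      linear_combination (-(θ i.1) * Real.exp (β i.1 * y i)) * hE
    rw [hρ, hexp, Real.exp_add]
    ring
  have hint : (∫ y : (↥J) → ℝ,
        Real.exp (∑ i : ↥J, (-(Real.exp (-(β i.1) * x) * θ i.1) * Real.exp (β i.1 * y i)
          + β i.1 * y i)) * ρ J (-y))
      = (Real.exp (x * S) * Real.exp (-x)) *
        ∫ y : (↥J) → ℝ,
          Real.exp (∑ i : ↥J, (-(θ i.1) * Real.exp (β i.1 * y i) + β i.1 * y i)) * ρ J (-y) := by
    rw [← MeasureTheory.integral_add_right_eq_self (μ := volume)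
        (f := fun y : (↥J) → ℝ =>
          Real.exp (∑ i : ↥J, (-(Real.exp (-(β i.1) * x) * θ i.1) * Real.exp (β i.1 * y i)
            + β i.1 * y i)) * ρ J (-y)) (fun _ => x),
      ← MeasureTheory.integral_const_mul]
    exact MeasureTheory.integral_congr_ae (Filter.Eventually.of_forall key)
  rw [hint, hprod]
  have hE : Real.exp (-x * S) * (Real.exp (x * S) * Real.exp (-x)) = Real.exp (-x) := by
    rw [← Real.exp_add, ← Real.exp_add, show -x * S + (x * S + -x) = -x by ring]
  linear_combination ((∏ i ∈ J, β i * θ i) *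
    ∫ y : (↥J) → ℝ,
      Real.exp (∑ i : ↥J, (-(θ i.1) * Real.exp (β i.1 * y i) + β i.1 * y i)) * ρ J (-y)) * hE

/-- under the stated hypotheses on the family `ρ_J`
(shift covariance `ρ_J(δ + x·𝟙) = e^x ρ_J(δ)` and the bound `ρ_J(δ) ≤ c min_{i∈J} e^{δ_i}`),
`F(e^{-β₁ x} θ₁, ..., e^{-β_l x} θ_l) = e^{-x} F(θ)` for every `x ∈ ℝ`. -/
theorem stmt6 (l : ℕ) (hl : 1 ≤ l) (β : Fin l → ℝ) (hβ : ∀ i, 1 < β i)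
    (c : ℝ) (hc : 0 < c)
    (ρ : (J : Finset (Fin l)) → ((↥J) → ℝ) → ℝ)
    (hρmeas : ∀ J, Measurable (ρ J))
    (hρnonneg : ∀ J δ, 0 ≤ ρ J δ)
    (hρshift : ∀ (J : Finset (Fin l)), J.Nonempty → ∀ (x : ℝ) (δ : (↥J) → ℝ),
      ρ J (fun i => δ i + x) = Real.exp x * ρ J δ)
    (hρbd : ∀ (J : Finset (Fin l)), J.Nonempty → ∀ (δ : (↥J) → ℝ) (i : ↥J),
      ρ J δ ≤ c * Real.exp (δ i))
    (θ : Fin l → ℝ) (hθ : ∀ i, 0 < θ i) :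
    ∀ x : ℝ,
      FAux l β (fun i => Real.exp (-(β i) * x) * θ i) ρ = Real.exp (-x) * FAux l β θ ρ := by
  intro x
  rw [FAux, FAux, Finset.mul_sum]
  refine Finset.sum_congr rfl (fun k hk => ?_)
  have hk1 : 1 ≤ k := (Finset.mem_Icc.mp hk).1
  have hg : gAux l β (fun i => Real.exp (-(β i) * x) * θ i) ρ k
      = Real.exp (-x) * gAux l β θ ρ k := by
    rw [gAux, gAux, Finset.mul_sum]
    refine Finset.sum_congr rfl (fun J hJmem => ?_)
    have hJcard : J.card = k := (Finset.mem_filter.mp hJmem).2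
    have hJ : J.Nonempty := Finset.card_pos.mp (hJcard ▸ hk1)
    exact term_scale l β θ ρ hρshift J hJ x
  rw [hg]; ring
end

section
/- Let l ≥ 1 and β = (β₁, ..., β_l) ∈ (1, ∞)^l, let c > 0, and suppose that for every nonempty subset J ⊆ {1, ..., l} a measurable function ρ_J: ℝ^J → [0, ∞) is given satisfying ρ_J(δ) ≤ c · min_{i ∈ J} e^{δ_i} for all δ ∈ ℝ^J. For θ = (θ₁, ..., θ_l) ∈ (0, ∞)^l and 1 ≤ k ≤ l define g_k(θ) := Σ_{J ⊆ {1,...,l}, |J| = k} ( Π_{i ∈ J} β_i θ_i ) · ∫_{ℝ^J} exp( Σ_{i ∈ J} ( −θ_i e^{β_i y_i} + β_i y_i ) ) ρ_J(−y) dy, and F(θ) := Σ_{k=1}^l (−1)^{k+1} g_k(θ). Then every g_k(θ) tends to 0, and hence F(θ) tends to 0, as θ → 0 in (0, ∞)^l. -/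
/-!
The bound `ρ_J(δ) ≤ c · min_{i∈J} e^{δ_i}` is weakened to `c · ∏_{i∈J} e^{δ_i/|J|}`, since a
minimum is at most the mean. With this bound the integral over `ℝ^J` splits into one-dimensional
integrals `∫ exp(-θ e^{β y} + a y) dy = θ^{-a/β} Γ(a/β) / β` (put `x = e^y`) with
`a = β_i - 1/|J| > 0`. So the `J`-term of `g_k(θ)` is at most
`c ∏_{i∈J} Γ((β_i - 1/k)/β_i) θ_i^{1/(k β_i)}`, which tends to `0` with `θ` because the
exponents are positive.
-/

open MeasureTheory Filter Topology

open Real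

theorem exp_mul_rpow_mul_exp_neg_mul_rpow_exp (θ β a y : ℝ) :
    exp y * (exp y ^ (a - 1) * exp (-θ * exp y ^ β)) = exp (-θ * exp (β * y) + a * y) := by
  rw [← exp_mul, ← exp_mul, ← exp_add, ← exp_add, mul_comm β y]
  congr 1
  ring

theorem integral_exp_neg_mul_exp_mul_add_mul {θ β a : ℝ} (hθ : 0 < θ) (hβ : 0 < β) (ha : 0 < a) :
    ∫ y : ℝ, exp (-θ * exp (β * y) + a * y) = θ ^ (-a / β) * (1 / β) * Gamma (a / β) := by
  have h := integral_image_eq_integral_abs_deriv_smul MeasurableSet.univ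
    (fun y _ => (hasDerivAt_exp y).hasDerivWithinAt) exp_injective.injOn
    (fun x => x ^ (a - 1) * exp (-θ * x ^ β))
  rw [Set.image_univ, range_exp, integral_rpow_mul_exp_neg_mul_rpow hβ (by linarith) hθ,
    setIntegral_univ] at h
  simp only [abs_exp, smul_eq_mul, exp_mul_rpow_mul_exp_neg_mul_rpow_exp, sub_add_cancel] at h
  exact h.symm

theorem integrable_exp_neg_mul_exp_mul_add_mul {θ β a : ℝ} (hθ : 0 < θ) (hβ : 0 < β) (ha : 0 < a) :
    Integrable (fun y : ℝ => exp (-θ * exp (β * y) + a * y)) := by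
  refine Integrable.of_integral_ne_zero ?_
  rw [integral_exp_neg_mul_exp_mul_add_mul hθ hβ ha]
  have := Gamma_pos_of_pos (div_pos ha hβ)
  positivity

theorem le_mul_prod_exp_inv_card_mul {ι : Type*} [Fintype ι] [Nonempty ι] {r c : ℝ} {δ : ι → ℝ}
    (hr : 0 ≤ r) (h : ∀ i, r ≤ c * exp (δ i)) :
    r ≤ c * ∏ i, exp ((Fintype.card ι : ℝ)⁻¹ * δ i) := by
  obtain ⟨i₀, hi₀⟩ := Finite.exists_min δ
  have hc : 0 ≤ c := nonneg_of_mul_nonneg_left (hr.trans (h i₀)) (exp_pos _)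
  have hcard : (0 : ℝ) < Fintype.card ι := by exact_mod_cast Fintype.card_pos
  have hmin_le_mean : δ i₀ ≤ (Fintype.card ι : ℝ)⁻¹ * ∑ i, δ i := by
    rw [le_inv_mul_iff₀ hcard]
    simpa only [Finset.card_univ, nsmul_eq_mul] using
      Finset.card_nsmul_le_sum Finset.univ δ (δ i₀) fun i _ => hi₀ i
  calc r ≤ c * exp (δ i₀) := h i₀
    _ ≤ c * exp ((Fintype.card ι : ℝ)⁻¹ * ∑ i, δ i) := by gcongr
    _ = c * ∏ i, exp ((Fintype.card ι : ℝ)⁻¹ * δ i) := by rw [Finset.mul_sum, exp_sum]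

theorem mul_integral_exp_mul_le {ι : Type*} [Fintype ι] {β θ : ι → ℝ} {c ε : ℝ}
    {ρ : (ι → ℝ) → ℝ} (hε : 0 < ε) (hεβ : ∀ i, ε < β i) (hθ : ∀ i, 0 < θ i)
    (hρ₀ : ∀ δ, 0 ≤ ρ δ) (hρ : ∀ δ, ρ δ ≤ c * ∏ i, exp (ε * δ i)) :
    (∏ i, β i * θ i) * ∫ y : ι → ℝ, exp (∑ i, (-θ i * exp (β i * y i) + β i * y i)) * ρ (-y)
      ≤ c * ∏ i, Gamma ((β i - ε) / β i) * θ i ^ (ε / β i) := by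
  have hβ : ∀ i, 0 < β i := fun i => hε.trans (hεβ i)
  set f : ι → ℝ → ℝ := fun i t => exp (-θ i * exp (β i * t) + (β i - ε) * t)
  have hf : ∀ i, Integrable (f i) := fun i =>
    integrable_exp_neg_mul_exp_mul_add_mul (hθ i) (hβ i) (by linarith [hεβ i])
  have hρf : ∀ y : ι → ℝ,
      exp (∑ i, (-θ i * exp (β i * y i) + β i * y i)) * ρ (-y) ≤ c * ∏ i, f i (y i) := by
    intro y
    calc exp (∑ i, (-θ i * exp (β i * y i) + β i * y i)) * ρ (-y)
        ≤ exp (∑ i, (-θ i * exp (β i * y i) + β i * y i)) * (c * ∏ i, exp (ε * -y i)) :=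
          mul_le_mul_of_nonneg_left (hρ (-y)) (exp_pos _).le
      _ = c * ∏ i, f i (y i) := by
          rw [mul_left_comm, exp_sum, ← Finset.prod_mul_distrib]
          congr 1
          refine Finset.prod_congr rfl fun i _ => ?_
          rw [← exp_add]
          congr 1
          ring
  have hfactor : ∀ i, β i * θ i * ∫ t, f i t = Gamma ((β i - ε) / β i) * θ i ^ (ε / β i) := by
    intro i
    rw [integral_exp_neg_mul_exp_mul_add_mul (hθ i) (hβ i) (by linarith [hεβ i])]
    have hβi : β i ≠ 0 := (hβ i).ne'
    have hexp : θ i ^ (ε / β i) = θ i * θ i ^ (-(β i - ε) / β i) := by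
      have hq : 1 + -(β i - ε) / β i = ε / β i := by
        field_simp
        ring
      rw [← rpow_one_add' (hθ i).le (hq ▸ (div_pos hε (hβ i)).ne'), hq]
    rw [hexp]
    field_simp
  calc (∏ i, β i * θ i) * ∫ y : ι → ℝ, exp (∑ i, (-θ i * exp (β i * y i) + β i * y i)) * ρ (-y)
      ≤ (∏ i, β i * θ i) * ∫ y : ι → ℝ, c * ∏ i, f i (y i) := by
        refine mul_le_mul_of_nonneg_left ?_
          (Finset.prod_nonneg fun i _ => (mul_pos (hβ i) (hθ i)).le)
        exact integral_mono_of_nonneg (.of_forall fun y => mul_nonneg (exp_pos _).le (hρ₀ _))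
          ((Integrable.fintype_prod hf).const_mul c) (.of_forall hρf)
    _ = c * ∏ i, Gamma ((β i - ε) / β i) * θ i ^ (ε / β i) := by
        rw [integral_const_mul, integral_fintype_prod_volume_eq_prod, mul_left_comm,
          ← Finset.prod_mul_distrib]
        simp only [hfactor]

theorem tendsto_prod_mul_rpow_nhds_zero {ι : Type*} {s : Finset ι} (hs : s.Nonempty)
    (C p : ι → ℝ) (hp : ∀ i ∈ s, 0 < p i) :
    Tendsto (fun θ : ι → ℝ => ∏ i ∈ s, C i * θ i ^ p i) (𝓝 0) (𝓝 0) := by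
  have hcont : Continuous fun θ : ι → ℝ => ∏ i ∈ s, C i * θ i ^ p i :=
    continuous_finsetProd s fun i hi =>
      continuous_const.mul ((continuous_rpow_const (hp i hi).le).comp (continuous_apply i))
  obtain ⟨i, hi⟩ := hs
  have hzero : ∏ j ∈ s, C j * (0 : ι → ℝ) j ^ p j = 0 :=
    Finset.prod_eq_zero hi (by simp [zero_rpow (hp i hi).ne'])
  simpa only [hzero] using hcont.tendsto 0

section gAux

variable {l : ℕ} {β θ : Fin l → ℝ} {c : ℝ} {ρ : (J : Finset (Fin l)) → ((↥J) → ℝ) → ℝ}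

theorem gAux_nonneg (hβ : ∀ i, 0 ≤ β i) (hθ : ∀ i, 0 ≤ θ i) (hρ₀ : ∀ J δ, 0 ≤ ρ J δ) (k : ℕ) :
    0 ≤ gAux l β θ ρ k :=
  Finset.sum_nonneg fun J _ =>
    mul_nonneg (Finset.prod_nonneg fun i _ => mul_nonneg (hβ i) (hθ i))
      (integral_nonneg fun _ => mul_nonneg (exp_pos _).le (hρ₀ J _))

theorem gAux_le (hβ : ∀ i, 1 < β i) (hθ : ∀ i, 0 < θ i) (hρ₀ : ∀ J δ, 0 ≤ ρ J δ)
    (hρ : ∀ J : Finset (Fin l), J.Nonempty → ∀ (δ : (↥J) → ℝ) (i : ↥J), ρ J δ ≤ c * exp (δ i))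
    {k : ℕ} (hk : 1 ≤ k) :
    gAux l β θ ρ k ≤ ∑ J ∈ Finset.univ.powerset.filter (fun J : Finset (Fin l) => J.card = k),
      c * ∏ i ∈ J, Gamma ((β i - (k : ℝ)⁻¹) / β i) * θ i ^ ((k : ℝ)⁻¹ / β i) := by
  refine Finset.sum_le_sum fun J hJ => ?_
  have hJk : J.card = k := (Finset.mem_filter.mp hJ).2
  have hJ : J.Nonempty := Finset.card_pos.mp (hJk ▸ hk)
  have : Nonempty J := hJ.to_subtype
  have hk₀ : (0 : ℝ) < (k : ℝ)⁻¹ := inv_pos.mpr (by exact_mod_cast hk)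
  have hk₁ : (k : ℝ)⁻¹ ≤ 1 := inv_le_one_of_one_le₀ (by exact_mod_cast hk)
  have h := mul_integral_exp_mul_le (β := fun i : J => β i) (θ := fun i : J => θ i)
    hk₀ (fun i => hk₁.trans_lt (hβ i)) (fun i => hθ i) (hρ₀ J) fun δ => by
      simpa only [Fintype.card_coe, hJk] using
        le_mul_prod_exp_inv_card_mul (hρ₀ J δ) (hρ J hJ δ)
  rwa [← Finset.prod_coe_sort J, ← Finset.prod_coe_sort J]

theorem tendsto_gAux (hβ : ∀ i, 1 < β i) (hρ₀ : ∀ J δ, 0 ≤ ρ J δ)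
    (hρ : ∀ J : Finset (Fin l), J.Nonempty → ∀ (δ : (↥J) → ℝ) (i : ↥J), ρ J δ ≤ c * exp (δ i))
    {k : ℕ} (hk : 1 ≤ k) :
    Tendsto (fun θ : Fin l → ℝ => gAux l β θ ρ k) (𝓝[{θ | ∀ i, 0 < θ i}] 0) (𝓝 0) := by
  have hbound : Tendsto (fun θ : Fin l → ℝ =>
      ∑ J ∈ Finset.univ.powerset.filter (fun J : Finset (Fin l) => J.card = k),
        c * ∏ i ∈ J, Gamma ((β i - (k : ℝ)⁻¹) / β i) * θ i ^ ((k : ℝ)⁻¹ / β i)) (𝓝 0) (𝓝 0) := by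
    simpa only [mul_zero, Finset.sum_const_zero] using tendsto_finsetSum _ fun J hJ =>
      (tendsto_prod_mul_rpow_nhds_zero (Finset.card_pos.mp ((Finset.mem_filter.mp hJ).2 ▸ hk)) _ _
        fun i _ => div_pos (inv_pos.mpr (by exact_mod_cast hk)) (one_pos.trans (hβ i))).const_mul c
  exact squeeze_zero'
    (eventually_nhdsWithin_of_forall fun θ hθ =>
      gAux_nonneg (fun i => (one_pos.trans (hβ i)).le) (fun i => (hθ i).le) hρ₀ k)
    (eventually_nhdsWithin_of_forall fun θ hθ => gAux_le hβ hθ hρ₀ hρ hk)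
    (hbound.mono_left nhdsWithin_le_nhds)

end gAux

theorem stmt7_general (l : ℕ) (β : Fin l → ℝ) (hβ : ∀ i, 1 < β i)
    (c : ℝ)
    (ρ : (J : Finset (Fin l)) → ((↥J) → ℝ) → ℝ)
    (hρnonneg : ∀ J δ, 0 ≤ ρ J δ)
    (hρbd : ∀ (J : Finset (Fin l)), J.Nonempty → ∀ (δ : (↥J) → ℝ) (i : ↥J),
      ρ J δ ≤ c * Real.exp (δ i)) :
    (∀ k : ℕ, 1 ≤ k → k ≤ l →
      Tendsto (fun θ : Fin l → ℝ => gAux l β θ ρ k)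
        (𝓝[{θ : Fin l → ℝ | ∀ i, 0 < θ i}] 0) (𝓝 0)) ∧
    Tendsto (fun θ : Fin l → ℝ => FAux l β θ ρ)
      (𝓝[{θ : Fin l → ℝ | ∀ i, 0 < θ i}] 0) (𝓝 0) := by
  have hg : ∀ k, 1 ≤ k → Tendsto (fun θ : Fin l → ℝ => gAux l β θ ρ k)
      (𝓝[{θ : Fin l → ℝ | ∀ i, 0 < θ i}] 0) (𝓝 0) :=
    fun k hk => tendsto_gAux hβ hρnonneg hρbd hk
  refine ⟨fun k hk _ => hg k hk, ?_⟩
  simpa only [FAux, mul_zero, Finset.sum_const_zero] using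
    tendsto_finsetSum (Finset.Icc 1 l) fun k hk =>
      (hg k (Finset.mem_Icc.mp hk).1).const_mul ((-1 : ℝ) ^ (k + 1))

/-- under the bound `ρ_J(δ) ≤ c min_{i∈J} e^{δ_i}`, every `g_k(θ)` tends to `0`,
and hence `F(θ)` tends to `0`, as `θ → 0` within `(0, ∞)^l`. -/
theorem stmt7 (l : ℕ) (hl : 1 ≤ l) (β : Fin l → ℝ) (hβ : ∀ i, 1 < β i)
    (c : ℝ) (hc : 0 < c)
    (ρ : (J : Finset (Fin l)) → ((↥J) → ℝ) → ℝ)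
    (hρmeas : ∀ J, Measurable (ρ J))
    (hρnonneg : ∀ J δ, 0 ≤ ρ J δ)
    (hρbd : ∀ (J : Finset (Fin l)), J.Nonempty → ∀ (δ : (↥J) → ℝ) (i : ↥J),
      ρ J δ ≤ c * Real.exp (δ i)) :
    (∀ k : ℕ, 1 ≤ k → k ≤ l →
      Tendsto (fun θ : Fin l → ℝ => gAux l β θ ρ k)
        (𝓝[{θ : Fin l → ℝ | ∀ i, 0 < θ i}] 0) (𝓝 0)) ∧
    Tendsto (fun θ : Fin l → ℝ => FAux l β θ ρ)
      (𝓝[{θ : Fin l → ℝ | ∀ i, 0 < θ i}] 0) (𝓝 0) :=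
  stmt7_general l β hβ c ρ hρnonneg hρbd
end
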